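/- Let T ≤ SL(3,ℂ) be the subgroup generated by diag(ζ₇, ζ₇², ζ₇⁴) and M_τ. Then: (i) for every point X ∈ ℙ² other than [1:0:0], [0:1:0], [0:0:1], if the T-orbit of X has at most 8 elements then it has exactly 7 elements and contains the point [1:ζ₃^c:ζ₃^{2c}] for some c ∈ {0,1,2}; (ii) the points [1:1:1], [1:ζ₃:ζ₃²], [1:ζ₃²:ζ₃] lie in three pairwise distinct T-orbits, each of which has exactly 7 elements; (iii) each of these three orbits has no three collinear points, and no six points of any of these orbits lie on a conic. -/

import Mathlib

open Matrix Complex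

noncomputable section

abbrev M3 : Type := Matrix (Fin 3) (Fin 3) ℂ
abbrev SL3 : Type := Matrix.SpecialLinearGroup (Fin 3) ℂ
abbrev P2 : Type := Projectivization ℂ (Fin 3 → ℂ)

/-- The matrix `M_τ`. -/
def Mtau : M3 := !![0,1,0; 0,0,1; 1,0,0]

/-- `ζ_n = exp(2πi/n)`. -/
def zeta (n : ℕ) : ℂ := Complex.exp (2 * Real.pi * Complex.I / n)

/-- The subgroup of `SL(3,ℂ)` generated by a given set of matrices. -/
def genSL (s : Set M3) : Subgroup SL3 :=
  Subgroup.closure { g : SL3 | (g : M3) ∈ s }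

/-- The orbit of a point of `ℙ²` under a set of (invertible) matrices,
acting by `[v] ↦ [g·v]`. -/
def projOrbit (G : Set M3) (p : P2) : Set P2 :=
  { q | ∃ g ∈ G, ∃ h : g.mulVec p.rep ≠ 0, Projectivization.mk ℂ (g.mulVec p.rep) h = q }

/-- The orbit of a point of `ℙ²` under a subgroup of `SL(3,ℂ)`. -/
def projOrbitSL (G : Subgroup SL3) (p : P2) : Set P2 :=
  projOrbit ((fun g : SL3 => (g : M3)) '' (G : Set SL3)) p

/-- The point `[x:y:z] ∈ ℙ²`. -/
def pt (x y z : ℂ) (h : ![x,y,z] ≠ 0) : P2 := Projectivization.mk ℂ ![x,y,z] h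

lemma vne₀ {x y z : ℂ} (hx : x ≠ 0) : ![x,y,z] ≠ 0 := by
  intro h; exact hx (by simpa using congrFun h 0)

lemma vne₁ {x y z : ℂ} (hy : y ≠ 0) : ![x,y,z] ≠ 0 := by
  intro h; exact hy (by simpa using congrFun h 1)

lemma vne₂ {x y z : ℂ} (hz : z ≠ 0) : ![x,y,z] ≠ 0 := by
  intro h; exact hz (by simpa using congrFun h 2)

/-- No three distinct points of `P` are collinear. -/
def NoThreeCollinear (P : Set P2) : Prop :=
  ∀ p q r, p ∈ P → q ∈ P → r ∈ P → p ≠ q → p ≠ r → q ≠ r →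
    LinearIndependent ℂ ![p.rep, q.rep, r.rep]

/-- The points of `P` all lie on a conic. -/
def LiesOnConic (P : Set P2) : Prop :=
  ∃ Q : QuadraticForm ℂ (Fin 3 → ℂ), Q ≠ 0 ∧ ∀ p ∈ P, Q p.rep = 0

/-- The subgroup of `SL(3,ℂ)` generated by `diag(ζ₇, ζ₇², ζ₇⁴)` and `M_τ`. -/
def T7 : Subgroup SL3 := genSL {Matrix.diagonal ![zeta 7, zeta 7 ^ 2, zeta 7 ^ 4], Mtau}

/-!
The generator `D = diag(ζ₇, ζ₇², ζ₇⁴)` has distinct eigenvalues, so the `⟨D⟩`-orbit of a point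
with two nonzero coordinates has 7 elements. If `M_τ X` lies outside the `⟨D⟩`-orbit of `X`, the
`T`-orbit of `X` contains two disjoint such orbits and has at least 14 points. Otherwise
`M_τ X ∼ D^n X`, and solving these equations gives `X = [1 : x w : x³ w²]` with `x⁷ = w³ = 1`;
for fixed `w` these seven points form one `T`-orbit.

Three of these points are dependent only if `(y - x)(z - x)(z - y)(x + y + z) = 0`, which is
impossible: no three seventh roots of unity sum to zero, since the seventh cyclotomic polynomial
would divide a sum of three monomials, whose value at 1 is 3. A conic `Q` through six of them
makes `x ↦ x · Q(1, x w, x³ w²)`, a polynomial of degree at most 5 once `x⁷ = 1` is used, vanish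
at six points, so all coefficients of `Q` vanish.
-/

open Projectivization MulAction
open scoped LinearAlgebra.Projectivization Pointwise

theorem isPrimitiveRoot_zeta {n : ℕ} (hn : n ≠ 0) : IsPrimitiveRoot (zeta n) n := by
  simpa [zeta] using Complex.isPrimitiveRoot_exp n hn

theorem isPrimitiveRoot_zeta_seven : IsPrimitiveRoot (zeta 7) 7 :=
  isPrimitiveRoot_zeta (by norm_num)

theorem IsPrimitiveRoot.sum_pow_ne_zero {K ι : Type*} [Field K] [CharZero K] {ζ : K} {p : ℕ}
    (hp : p.Prime) (hζ : IsPrimitiveRoot ζ p) (s : Finset ι) (e : ι → ℕ) (hs : ¬ p ∣ s.card) :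
    ∑ i ∈ s, ζ ^ e i ≠ 0 := by
  intro h
  have hdvd : Polynomial.cyclotomic p ℤ ∣ ∑ i ∈ s, Polynomial.X ^ e i := by
    rw [Polynomial.cyclotomic_eq_minpoly hζ hp.pos]
    apply minpoly.isIntegrallyClosed_dvd (hζ.isIntegral hp.pos)
    simpa using h
  obtain ⟨g, hg⟩ := hdvd
  have hg1 := congrArg (Polynomial.eval 1) hg
  have := Fact.mk hp
  rw [Polynomial.eval_finsetSum] at hg1
  simp at hg1
  exact hs (by exact_mod_cast Dvd.intro _ hg1.symm)

theorem IsPrimitiveRoot.range_pow_eq {R : Type*} [CommRing R] [IsDomain R] {ζ : R} {n : ℕ}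
    [NeZero n] (hζ : IsPrimitiveRoot ζ n) :
    Set.range (fun a : Fin n => ζ ^ (a : ℕ)) = {x | x ^ n = 1} := by
  ext x
  refine ⟨?_, fun hx => ?_⟩
  · rintro ⟨a, rfl⟩
    rw [Set.mem_ofPred_eq, pow_right_comm, hζ.pow_eq_one, one_pow]
  · obtain ⟨i, hi, rfl⟩ := hζ.eq_pow_of_pow_eq_one hx
    exact ⟨⟨i, hi⟩, rfl⟩

theorem eq_one_of_pow_three_of_pow_seven {M : Type*} [Monoid M] {x : M} (h3 : x ^ 3 = 1)
    (h7 : x ^ 7 = 1) : x = 1 := by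
  simpa using pow_gcd_eq_one.2 ⟨h3, h7⟩

theorem MulAction.orbit_closure_subset {G α : Type*} [Group G] [MulAction G α] {s : Set G}
    {S : Set α} (hS : ∀ g ∈ s, g • S = S) {a : α} (ha : a ∈ S) :
    orbit (Subgroup.closure s) a ⊆ S := by
  rintro _ ⟨⟨g, hg⟩, rfl⟩
  have hgS : g ∈ stabilizer G S :=
    (Subgroup.closure_le _).2 (fun g hg' => mem_stabilizer_iff.2 (hS g hg')) hg
  rw [← mem_stabilizer_iff.1 hgS]
  exact Set.smul_mem_smul_set ha

theorem Set.exists_forall_ne_mem_of_subset_range {α β : Type*} [Fintype α] {g : α → β}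
    (hg : Function.Injective g) {S : Set β} (hS : S ⊆ Set.range g) {n : ℕ} (hn : S.encard = n)
    (hcard : Fintype.card α = n + 1) : ∃ a₀, ∀ a ≠ a₀, g a ∈ S := by
  have hcompl : (g ⁻¹' S)ᶜ.encard = 1 := by
    have h := Set.encard_add_encard_compl (g ⁻¹' S)
    rw [Set.encard_preimage_of_injective_subset_range hg hS, hn, Set.encard_univ,
      ENat.card_eq_coe_fintype_card, hcard] at h
    simpa using h
  obtain ⟨a₀, ha₀⟩ := Set.encard_eq_one.1 hcompl
  refine ⟨a₀, fun a ha => ?_⟩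
  by_contra h
  have h' : a ∈ (g ⁻¹' S)ᶜ := h
  exact ha (by rwa [ha₀] at h')

theorem Projectivization.linearIndependent_rep_mk {ι K V : Type*} [DivisionRing K]
    [AddCommGroup V] [Module K V] {f : ι → V} (hf : ∀ i, f i ≠ 0) (h : LinearIndependent K f) :
    LinearIndependent K fun i => (mk K (f i) (hf i)).rep :=
  independent_iff.1 (.mk f hf h)

theorem QuadraticMap.apply_rep_mk_eq_zero_iff {K V : Type*} [Field K] [AddCommGroup V]
    [Module K V] (Q : QuadraticForm K V) {v : V} (hv : v ≠ 0) :
    Q (Projectivization.mk K v hv).rep = 0 ↔ Q v = 0 := by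
  obtain ⟨a, ha⟩ := exists_smul_eq_mk_rep K v hv
  rw [← ha, Units.smul_def, QuadraticMap.map_smul, smul_eq_mul, mul_eq_zero]
  simp

theorem QuadraticMap.apply_fin_three {R : Type*} [CommRing R]
    (Q : QuadraticMap R (Fin 3 → R) R) (v : Fin 3 → R) :
    Q v = v 0 * v 0 * Q (Pi.single 0 1) + v 1 * v 1 * Q (Pi.single 1 1)
      + v 2 * v 2 * Q (Pi.single 2 1) + v 0 * v 1 * polar Q (Pi.single 0 1) (Pi.single 1 1)
      + v 0 * v 2 * polar Q (Pi.single 0 1) (Pi.single 2 1)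
      + v 1 * v 2 * polar Q (Pi.single 1 1) (Pi.single 2 1) := by
  have hv : v = v 0 • Pi.single 0 1 + v 1 • Pi.single 1 1 + v 2 • Pi.single 2 1 := by
    ext i; fin_cases i <;> simp
  conv_lhs => rw [hv]
  rw [QuadraticMap.map_add Q, QuadraticMap.map_add Q, QuadraticMap.polar_add_left]
  simp only [QuadraticMap.map_smul, QuadraticMap.polar_smul_left,
    QuadraticMap.polar_smul_right, smul_eq_mul]
  ring

section OrbitVec

variable {K : Type*} [Field K]

/-- With `w³ = 1` and `x` running over the seventh roots of unity, `[orbitVec w x]` is the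
`T`-orbit of `[1 : w : w²]`. -/
def orbitVec (w x : K) : Fin 3 → K := ![1, x * w, x ^ 3 * w ^ 2]

theorem orbitVec_ne_zero (w x : K) : orbitVec w x ≠ 0 := fun h => by
  simpa [orbitVec] using congrFun h 0

theorem det_orbitVec (w x y z : K) :
    (Matrix.of ![orbitVec w x, orbitVec w y, orbitVec w z]).det =
      w ^ 3 * ((y - x) * (z - x) * (z - y) * (x + y + z)) := by
  simp [Matrix.det_fin_three, orbitVec]
  ring

theorem linearIndependent_orbitVec {w x y z : K} (hw : w ^ 3 = 1) (hxy : x ≠ y) (hxz : x ≠ z)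
    (hyz : y ≠ z) (hsum : x + y + z ≠ 0) :
    LinearIndependent K ![orbitVec w x, orbitVec w y, orbitVec w z] := by
  refine (Matrix.linearIndependent_rows_iff_isUnit
    (A := Matrix.of ![orbitVec w x, orbitVec w y, orbitVec w z])).2 ?_
  rw [Matrix.isUnit_iff_isUnit_det, det_orbitVec, hw, one_mul, isUnit_iff_ne_zero]
  exact mul_ne_zero (mul_ne_zero (mul_ne_zero (sub_ne_zero.2 hxy.symm)
    (sub_ne_zero.2 hxz.symm)) (sub_ne_zero.2 hyz.symm)) hsum

theorem QuadraticMap.eq_zero_of_apply_orbitVec_eq_zero {w : K} (hw : w ^ 3 = 1)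
    (Q : QuadraticForm K (Fin 3 → K)) {x : Fin 6 → K} (hx : Function.Injective x)
    (hx7 : ∀ i, x i ^ 7 = 1) (hQ : ∀ i, Q (orbitVec w (x i)) = 0) : Q = 0 := by
  set e : Fin 3 → Fin 3 → K := fun i => Pi.single i 1
  -- the coefficients of `y ↦ y * Q (orbitVec w y)` after reducing with `y ^ 7 = 1`, `w ^ 3 = 1`
  let c : Fin 6 → K := ![w * Q (e 2), Q (e 0), w * polar Q (e 0) (e 1), w ^ 2 * Q (e 1),
    w ^ 2 * polar Q (e 0) (e 2), polar Q (e 1) (e 2)]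
  have hpoly : ∀ y : K, y ^ 7 = 1 → y * Q (orbitVec w y) = ∑ j, c j * y ^ (j : ℕ) := by
    intro y hy
    rw [QuadraticMap.apply_fin_three]
    simp [Fin.sum_univ_six, orbitVec, c, e]
    linear_combination (Q (e 2) * w ^ 4) * hy + (Q (e 2) * w + polar Q (e 1) (e 2) * y ^ 5) * hw
  have hc : c = 0 := Matrix.eq_zero_of_forall_index_sum_mul_pow_eq_zero hx fun i => by
    rw [← hpoly _ (hx7 i), hQ i, mul_zero]
  have hw0 : w ≠ 0 := by rintro rfl; simp at hw
  have h := fun j => congrFun hc j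
  simp only [c, e, Fin.forall_fin_succ] at h
  simp [hw0] at h
  ext v
  simp [QuadraticMap.apply_fin_three, h]

theorem eq_smul_orbitVec_of_cycle_eq {v : Fin 3 → K} (hv : v ≠ 0) {r x : K} (hx : x ^ 7 = 1)
    (h0 : v 1 = r * (x * v 0)) (h1 : v 2 = r * (x ^ 2 * v 1)) (h2 : v 0 = r * (x ^ 4 * v 2)) :
    r ^ 3 = 1 ∧ v = v 0 • orbitVec r x := by
  have hv0 : v 0 ≠ 0 := by
    intro h
    have h1' : v 1 = 0 := by rw [h0, h, mul_zero, mul_zero]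
    have h2' : v 2 = 0 := by rw [h1, h1', mul_zero, mul_zero]
    exact hv (funext fun k => by fin_cases k <;> assumption)
  refine ⟨mul_right_cancel₀ hv0 ?_, ?_⟩
  · linear_combination (-1 : K) * h2 - r * x ^ 4 * h1 - r ^ 2 * x ^ 6 * h0 - r ^ 3 * v 0 * hx
  · ext k
    fin_cases k <;> simp [orbitVec]
    · linear_combination h0
    · linear_combination h1 + r * x ^ 2 * h0

def orbitPt (w x : K) : ℙ K (Fin 3 → K) := mk K (orbitVec w x) (orbitVec_ne_zero w x)

theorem orbitPt_eq_orbitPt_iff {w x w' x' : K} :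
    orbitPt w x = orbitPt w' x' ↔ orbitVec w x = orbitVec w' x' := by
  refine ⟨fun h => ?_, fun h => by rw [orbitPt, orbitPt]; congr⟩
  obtain ⟨a, ha⟩ := (mk_eq_mk_iff K _ _ _ _).1 h
  have ha1 : (a : K) = 1 := by simpa [orbitVec, Units.smul_def] using congrFun ha 0
  rwa [Units.smul_def, ha1, one_smul, eq_comm] at ha

theorem mk_eq_orbitPt_of_eq_smul {v : Fin 3 → K} (hv : v ≠ 0) {w x : K}
    (h : v = v 0 • orbitVec w x) : mk K v hv = orbitPt w x := by
  rw [orbitPt, mk_eq_mk_iff']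
  exact ⟨v 0, h.symm⟩

end OrbitVec

theorem pt_one_eq_orbitPt {w z : ℂ} (hz : z = w ^ 2) (h : ![1, w, z] ≠ 0) :
    pt 1 w z h = orbitPt w 1 := by
  rw [pt, orbitPt]
  congr 1
  simp [orbitVec, hz]

theorem exists_ne_rep_ne_zero {X : P2} (h0 : X ≠ pt 1 0 0 (vne₀ one_ne_zero))
    (h1 : X ≠ pt 0 1 0 (vne₁ one_ne_zero)) (h2 : X ≠ pt 0 0 1 (vne₂ one_ne_zero)) :
    ∃ i j, i ≠ j ∧ X.rep i ≠ 0 ∧ X.rep j ≠ 0 := by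
  by_contra! h
  obtain ⟨i, hi⟩ := Function.ne_iff.1 X.rep_nonzero
  have hX : X = mk ℂ (Pi.single i 1) (by simp) := by
    rw [← X.mk_rep, mk_eq_mk_iff']
    refine ⟨X.rep i, funext fun j => ?_⟩
    by_cases hj : j = i
    · subst hj; simp
    · simp [hj, h i j (Ne.symm hj) hi]
  fin_cases i
  · exact h0 (hX.trans (by rw [pt]; congr 1; ext j; fin_cases j <;> rfl))
  · exact h1 (hX.trans (by rw [pt]; congr 1; ext j; fin_cases j <;> rfl))
  · exact h2 (hX.trans (by rw [pt]; congr 1; ext j; fin_cases j <;> rfl))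

theorem projOrbitSL_eq_orbit (G : Subgroup SL3) (p : P2) : projOrbitSL G p = orbit G p := by
  ext q
  constructor
  · rintro ⟨_, ⟨g, hg, rfl⟩, hv, rfl⟩
    refine ⟨⟨g, hg⟩, ?_⟩
    conv_lhs => rw [← p.mk_rep]
    rfl
  · rintro ⟨⟨g, hg⟩, rfl⟩
    refine ⟨g, ⟨g, hg, rfl⟩, (smul_ne_zero_iff_ne g).2 p.rep_nonzero, ?_⟩
    conv_rhs => rw [← p.mk_rep]
    rfl

theorem det_diagonal_zeta_seven : (diagonal ![zeta 7, zeta 7 ^ 2, zeta 7 ^ 4]).det = 1 := by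
  rw [det_diagonal, Fin.prod_univ_three]
  simpa [← pow_succ', ← pow_add] using isPrimitiveRoot_zeta_seven.pow_eq_one

theorem det_Mtau : Mtau.det = 1 := by
  simp [Mtau, det_fin_three]

namespace T7

def diagGen : SL3 := ⟨diagonal ![zeta 7, zeta 7 ^ 2, zeta 7 ^ 4], det_diagonal_zeta_seven⟩

def cycleGen : SL3 := ⟨Mtau, det_Mtau⟩

theorem eq_closure : T7 = Subgroup.closure {diagGen, cycleGen} := by
  unfold T7 genSL
  congr 1
  ext g
  simp only [Set.mem_ofPred_eq, Set.mem_insert_iff, Set.mem_singleton_iff]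
  exact or_congr (Subtype.ext_iff (a2 := diagGen)).symm (Subtype.ext_iff (a2 := cycleGen)).symm

theorem diagGen_mem : diagGen ∈ T7 := eq_closure ▸ Subgroup.subset_closure (by simp)

theorem cycleGen_mem : cycleGen ∈ T7 := eq_closure ▸ Subgroup.subset_closure (by simp)

theorem diagGen_pow_smul_apply (n : ℕ) (v : Fin 3 → ℂ) (i : Fin 3) :
    (diagGen ^ n • v) i = zeta 7 ^ (![1, 2, 4] i * n) * v i := by
  rw [Matrix.SpecialLinearGroup.smul_def, Matrix.SpecialLinearGroup.coe_pow, smul_eq_mulVec,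
    diagGen, Matrix.SpecialLinearGroup.coe_mk, diagonal_pow, mulVec_diagonal]
  fin_cases i <;> simp [pow_mul]

theorem cycleGen_smul_apply (v : Fin 3 → ℂ) (i : Fin 3) : (cycleGen • v) i = v (i + 1) := by
  rw [Matrix.SpecialLinearGroup.smul_def, smul_eq_mulVec]
  fin_cases i <;> simp [cycleGen, Mtau, mulVec, dotProduct, Fin.sum_univ_three]

theorem isOfFinOrder_diagGen : IsOfFinOrder diagGen := by
  refine isOfFinOrder_iff_pow_eq_one.2 ⟨7, by norm_num, Subtype.ext ?_⟩
  rw [Matrix.SpecialLinearGroup.coe_pow, diagGen, Matrix.SpecialLinearGroup.coe_mk, diagonal_pow,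
    Matrix.SpecialLinearGroup.coe_one, ← diagonal_one]
  congr 1
  ext i
  fin_cases i <;> simp [← pow_mul, isPrimitiveRoot_zeta_seven.pow_eq_one_iff_dvd]

theorem diagGen_smul_orbitPt (w x : ℂ) : diagGen • orbitPt w x = orbitPt w (zeta 7 * x) := by
  rw [orbitPt, smul_mk, orbitPt, mk_eq_mk_iff']
  refine ⟨zeta 7, funext fun i => ?_⟩
  have h := diagGen_pow_smul_apply 1 (orbitVec w x) i
  rw [pow_one] at h
  rw [h]
  fin_cases i <;> simp [orbitVec] <;> ring

theorem diagGen_pow_smul_orbitPt (w x : ℂ) (n : ℕ) :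
    diagGen ^ n • orbitPt w x = orbitPt w (zeta 7 ^ n * x) := by
  induction n with
  | zero => simp
  | succ n ih => rw [pow_succ', mul_smul, ih, diagGen_smul_orbitPt, pow_succ', mul_assoc]

theorem cycleGen_smul_orbitPt {w x : ℂ} (hw : w ^ 3 = 1) (hx : x ^ 7 = 1) :
    cycleGen • orbitPt w x = orbitPt w (x ^ 2) := by
  rw [orbitPt, smul_mk, orbitPt, mk_eq_mk_iff']
  refine ⟨x * w, funext fun i => ?_⟩
  rw [cycleGen_smul_apply]
  fin_cases i <;> simp [orbitVec]
  · ring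
  · linear_combination (w ^ 3) * hx + hw

theorem smul_image_orbitPt {g : SL3} {w : ℂ} {f : ℂ → ℂ}
    (hg : ∀ x : ℂ, x ^ 7 = 1 → g • orbitPt w x = orbitPt w (f x))
    (hf : f '' {x | x ^ 7 = 1} = {x | x ^ 7 = 1}) :
    g • (orbitPt w '' {x | x ^ 7 = 1}) = orbitPt w '' {x | x ^ 7 = 1} := by
  rw [← Set.image_smul, Set.image_image]
  conv_rhs => rw [← hf, Set.image_image]
  exact Set.image_congr hg

theorem orbit_orbitPt {w : ℂ} (hw : w ^ 3 = 1) :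
    orbit T7 (orbitPt w 1) = orbitPt w '' {x | x ^ 7 = 1} := by
  have hζ := isPrimitiveRoot_zeta_seven
  refine subset_antisymm ?_ ?_
  · rw [eq_closure]
    refine orbit_closure_subset ?_ ⟨1, one_pow 7, rfl⟩
    rintro g (rfl | rfl)
    · refine smul_image_orbitPt (fun x _ => diagGen_smul_orbitPt w x) ?_
      ext x
      refine ⟨?_, fun hx => ⟨zeta 7 ^ 6 * x, ?_, ?_⟩⟩
      · rintro ⟨y, hy, rfl⟩
        simp_all [mul_pow, hζ.pow_eq_one]
      · simp_all [mul_pow, ← pow_mul, hζ.pow_eq_one_iff_dvd]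
      · simp [← mul_assoc, ← pow_succ', hζ.pow_eq_one]
    · refine smul_image_orbitPt (fun x hx => cycleGen_smul_orbitPt hw hx) ?_
      ext x
      refine ⟨?_, fun hx => ⟨x ^ 4, ?_, ?_⟩⟩
      · rintro ⟨y, hy, rfl⟩
        simp_all [pow_right_comm _ 2]
      · simp_all [pow_right_comm _ 4]
      · have hx7 : x ^ 7 = 1 := hx
        linear_combination x * hx7
  · rintro _ ⟨x, hx, rfl⟩
    obtain ⟨n, -, rfl⟩ := hζ.eq_pow_of_pow_eq_one hx
    exact ⟨⟨diagGen ^ n, pow_mem diagGen_mem n⟩,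
      by simp [Subgroup.smul_def, diagGen_pow_smul_orbitPt]⟩

theorem orbit_orbitPt_eq_range {w : ℂ} (hw : w ^ 3 = 1) :
    orbit T7 (orbitPt w 1) = Set.range fun a : Fin 7 => orbitPt w (zeta 7 ^ (a : ℕ)) := by
  rw [orbit_orbitPt hw, ← isPrimitiveRoot_zeta_seven.range_pow_eq, ← Set.range_comp]
  rfl

theorem injective_orbitPt_zeta_pow {w : ℂ} (hw : w ≠ 0) :
    Function.Injective fun a : Fin 7 => orbitPt w (zeta 7 ^ (a : ℕ)) := by
  intro a b h
  have h1 := congrFun (orbitPt_eq_orbitPt_iff.1 h) 1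
  simp only [orbitVec, Matrix.cons_val_one, Matrix.cons_val_zero, mul_left_inj' hw] at h1
  exact Fin.ext (isPrimitiveRoot_zeta_seven.pow_inj a.isLt b.isLt h1)

theorem encard_orbit_orbitPt {w : ℂ} (hw : w ^ 3 = 1) :
    (orbit T7 (orbitPt w 1)).encard = 7 := by
  have hw0 : w ≠ 0 := by rintro rfl; simp at hw
  rw [orbit_orbitPt_eq_range hw, ← Set.image_univ, (injective_orbitPt_zeta_pow hw0).encard_image,
    Set.encard_univ, ENat.card_eq_coe_fintype_card, Fintype.card_fin]
  rfl

theorem noThreeCollinear_orbit_orbitPt {w : ℂ} (hw : w ^ 3 = 1) :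
    NoThreeCollinear (orbit T7 (orbitPt w 1)) := by
  rw [orbit_orbitPt_eq_range hw]
  rintro _ _ _ ⟨a, rfl⟩ ⟨b, rfl⟩ ⟨c, rfl⟩ hab hac hbc
  have hsum := isPrimitiveRoot_zeta_seven.sum_pow_ne_zero (by norm_num) Finset.univ ![a, b, c]
    (by simp)
  simp only [Fin.sum_univ_three, Matrix.cons_val_zero, Matrix.cons_val_one,
    Matrix.cons_val_two, Matrix.head_cons, Matrix.tail_cons] at hsum
  have hf := linearIndependent_orbitVec hw (ne_of_apply_ne _ hab) (ne_of_apply_ne _ hac)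
    (ne_of_apply_ne _ hbc) hsum
  have hrep := linearIndependent_rep_mk (fun i => by fin_cases i <;> exact orbitVec_ne_zero _ _) hf
  rwa [show (fun i => (mk ℂ _ _).rep) = ![_, _, _] by ext i : 1; fin_cases i <;> rfl] at hrep

theorem not_liesOnConic_of_subset_orbit {w : ℂ} (hw : w ^ 3 = 1) {S : Set P2}
    (hS : S ⊆ orbit T7 (orbitPt w 1)) (h6 : S.encard = 6) : ¬ LiesOnConic S := by
  rintro ⟨Q, hQ0, hQ⟩
  have hw0 : w ≠ 0 := by rintro rfl; simp at hw
  rw [orbit_orbitPt_eq_range hw] at hS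
  obtain ⟨a₀, ha₀⟩ :=
    Set.exists_forall_ne_mem_of_subset_range (injective_orbitPt_zeta_pow hw0) hS h6 rfl
  refine hQ0 (QuadraticMap.eq_zero_of_apply_orbitVec_eq_zero hw Q
    (x := fun i => zeta 7 ^ (a₀.succAbove i : ℕ)) ?_ ?_ ?_)
  · intro i j h
    exact Fin.succAbove_right_injective
      (Fin.ext (isPrimitiveRoot_zeta_seven.pow_inj (Fin.isLt _) (Fin.isLt _) h))
  · intro i
    rw [pow_right_comm, isPrimitiveRoot_zeta_seven.pow_eq_one, one_pow]
  · intro i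
    exact (QuadraticMap.apply_rep_mk_eq_zero_iff Q _).1
      (hQ _ (ha₀ _ (Fin.succAbove_ne a₀ i)))

theorem orbit_orbitPt_ne {w w' : ℂ} (hw : w ^ 3 = 1) (hw' : w' ^ 3 = 1) (hne : w ≠ w') :
    orbit T7 (orbitPt w 1) ≠ orbit T7 (orbitPt w' 1) := by
  intro h
  obtain ⟨x, hx, hxw⟩ : orbitPt w 1 ∈ orbitPt w' '' {x | x ^ 7 = 1} :=
    orbit_orbitPt hw' ▸ h ▸ mem_orbit_self _
  have h1 := congrFun (orbitPt_eq_orbitPt_iff.1 hxw) 1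
  simp only [orbitVec, Matrix.cons_val_one, Matrix.cons_val_zero, one_mul] at h1
  have hx3 : x ^ 3 = 1 := by
    have hw0 : w' ^ 3 ≠ 0 := by rw [hw']; exact one_ne_zero
    apply mul_right_cancel₀ hw0
    rw [← mul_pow, h1, hw, hw', one_mul]
  exact hne (by rw [← h1, eq_one_of_pow_three_of_pow_seven hx3 hx, one_mul])

/-- With `m = (1, 2, 4)`, the hypothesis says `(mᵢ - mⱼ)(a - b) ≡ 0 (mod 7)`, and `mᵢ - mⱼ` is
one of `±1, ±2, ±3`, a unit mod 7. -/
theorem eq_of_modEq_seven : ∀ i j : Fin 3, ∀ a b : Fin 7, i ≠ j →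
    ![1, 2, 4] i * (a : ℕ) + ![1, 2, 4] j * b ≡ ![1, 2, 4] j * a + ![1, 2, 4] i * b [MOD 7] →
      a = b := by
  decide

theorem injective_diagGen_pow_smul {v : Fin 3 → ℂ} (hv : v ≠ 0) {i j : Fin 3} (hij : i ≠ j)
    (hi : v i ≠ 0) (hj : v j ≠ 0) :
    Function.Injective fun a : Fin 7 => diagGen ^ (a : ℕ) • mk ℂ v hv := by
  intro a b hab
  simp only [smul_mk] at hab
  obtain ⟨r, hr⟩ := (mk_eq_mk_iff ℂ _ _ _ _).1 hab
  have hcoord : ∀ k, v k ≠ 0 →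
      (r : ℂ) * zeta 7 ^ (![1, 2, 4] k * (b : ℕ)) = zeta 7 ^ (![1, 2, 4] k * (a : ℕ)) := by
    intro k hk
    have h := congrFun hr k
    rw [Pi.smul_apply, diagGen_pow_smul_apply, diagGen_pow_smul_apply, Units.smul_def,
      smul_eq_mul, ← mul_assoc] at h
    exact mul_right_cancel₀ hk h
  have hpow : zeta 7 ^ (![1, 2, 4] i * (a : ℕ) + ![1, 2, 4] j * b) =
      zeta 7 ^ (![1, 2, 4] j * (a : ℕ) + ![1, 2, 4] i * b) := by
    rw [pow_add, pow_add, ← hcoord i hi, ← hcoord j hj]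
    ring
  have hζ := isPrimitiveRoot_zeta_seven
  rw [(hζ.isOfFinOrder (by norm_num)).pow_eq_pow_iff_modEq, ← hζ.eq_orderOf] at hpow
  exact eq_of_modEq_seven i j a b hij hpow

theorem seven_le_encard_orbit_zpowers {v : Fin 3 → ℂ} (hv : v ≠ 0) {i j : Fin 3} (hij : i ≠ j)
    (hi : v i ≠ 0) (hj : v j ≠ 0) :
    7 ≤ (orbit (Subgroup.zpowers diagGen) (mk ℂ v hv)).encard := by
  calc (7 : ℕ∞) = ENat.card (Fin 7) := by simp
    _ ≤ (Set.range fun a : Fin 7 => diagGen ^ (a : ℕ) • mk ℂ v hv).encard :=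
      (injective_diagGen_pow_smul hv hij hi hj).encard_range
    _ ≤ _ := Set.encard_le_encard <| by
      rintro _ ⟨a, rfl⟩
      exact ⟨⟨_, pow_mem (Subgroup.mem_zpowers _) _⟩, rfl⟩

theorem fourteen_le_encard_orbit {X : P2} {i j : Fin 3} (hij : i ≠ j) (hi : X.rep i ≠ 0)
    (hj : X.rep j ≠ 0) (hX : cycleGen • X ∉ orbit (Subgroup.zpowers diagGen) X) :
    14 ≤ (orbit T7 X).encard := by
  have hsub : ∀ Y ∈ orbit T7 X, orbit (Subgroup.zpowers diagGen) Y ⊆ orbit T7 X := by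
    rintro Y hY _ ⟨⟨g, hg⟩, rfl⟩
    rw [← orbit_eq_iff.2 hY]
    exact ⟨⟨g, Subgroup.zpowers_le.2 diagGen_mem hg⟩, rfl⟩
  have hdisj : Disjoint (orbit (Subgroup.zpowers diagGen) X)
      (orbit (Subgroup.zpowers diagGen) (cycleGen • X)) :=
    (orbit.eq_or_disjoint _ _).resolve_left fun h => hX (h ▸ mem_orbit_self _)
  have h7 : 7 ≤ (orbit (Subgroup.zpowers diagGen) X).encard := by
    simpa only [X.mk_rep] using seven_le_encard_orbit_zpowers X.rep_nonzero hij hi hj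
  have h7' : 7 ≤ (orbit (Subgroup.zpowers diagGen) (cycleGen • X)).encard := by
    conv => enter [2, 1, 2]; rw [← X.mk_rep, smul_mk]
    refine seven_le_encard_orbit_zpowers _ (i := i - 1) (j := j - 1) (by simpa using hij) ?_ ?_
      <;> simpa [cycleGen_smul_apply]
  calc (14 : ℕ∞) = 7 + 7 := by norm_num
    _ ≤ _ := add_le_add h7 h7'
    _ = _ := (Set.encard_union_eq hdisj).symm
    _ ≤ _ := Set.encard_le_encard (Set.union_subset (hsub X (mem_orbit_self X))
      (hsub _ ⟨⟨cycleGen, cycleGen_mem⟩, rfl⟩))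

theorem exists_mem_orbit_orbitPt {X : P2}
    (hX : cycleGen • X ∈ orbit (Subgroup.zpowers diagGen) X) :
    ∃ w : ℂ, w ^ 3 = 1 ∧ X ∈ orbit T7 (orbitPt w 1) := by
  obtain ⟨⟨g, hg⟩, hgX⟩ := hX
  obtain ⟨n, rfl⟩ := isOfFinOrder_diagGen.mem_powers_iff_mem_zpowers.2 hg
  change diagGen ^ n • X = cycleGen • X at hgX
  rw [← X.mk_rep, smul_mk, smul_mk] at hgX
  obtain ⟨r, hr⟩ := (mk_eq_mk_iff' ℂ _ _ _ _).1 hgX.symm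
  have hcoord := fun k => congrFun hr k
  simp only [Pi.smul_apply, smul_eq_mul, diagGen_pow_smul_apply, cycleGen_smul_apply] at hcoord
  have hx : (zeta 7 ^ n) ^ 7 = 1 := by
    rw [pow_right_comm, isPrimitiveRoot_zeta_seven.pow_eq_one, one_pow]
  obtain ⟨hr3, hv⟩ := eq_smul_orbitVec_of_cycle_eq X.rep_nonzero hx
    (by simpa using (hcoord 0).symm) (by simpa [pow_mul'] using (hcoord 1).symm)
    (by simpa [pow_mul'] using (hcoord 2).symm)
  refine ⟨r, hr3, ⟨diagGen ^ n, pow_mem diagGen_mem n⟩, ?_⟩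
  change diagGen ^ n • orbitPt r 1 = X
  rw [diagGen_pow_smul_orbitPt, mul_one, ← mk_eq_orbitPt_of_eq_smul X.rep_nonzero hv, X.mk_rep]

theorem exists_orbit_eq_of_encard_le_eight {X : P2} {i j : Fin 3} (hij : i ≠ j)
    (hi : X.rep i ≠ 0) (hj : X.rep j ≠ 0) (h8 : (orbit T7 X).encard ≤ 8) :
    ∃ w : ℂ, w ^ 3 = 1 ∧ orbit T7 X = orbit T7 (orbitPt w 1) := by
  by_cases hX : cycleGen • X ∈ orbit (Subgroup.zpowers diagGen) X
  · obtain ⟨w, hw, hXw⟩ := exists_mem_orbit_orbitPt hX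
    exact ⟨w, hw, orbit_eq_iff.2 hXw⟩
  · have h14 := (fourteen_le_encard_orbit hij hi hj hX).trans h8
    norm_num at h14

end T7

open T7 in
/-- for the group `T = ⟨diag(ζ₇,ζ₇²,ζ₇⁴), M_τ⟩ ≤ SL(3,ℂ)`:
(i) every point other than the coordinate points whose `T`-orbit has at most 8 elements has
an orbit with exactly 7 elements containing some `[1:ζ₃^c:ζ₃^{2c}]`;
(ii) `[1:1:1]`, `[1:ζ₃:ζ₃²]`, `[1:ζ₃²:ζ₃]` lie in three pairwise distinct `T`-orbits of size 7;
(iii) each of these orbits has no three collinear points and no six of its points lie on a conic. -/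
theorem statement5 :
    (∀ X : P2,
        X ≠ pt 1 0 0 (vne₀ one_ne_zero) → X ≠ pt 0 1 0 (vne₁ one_ne_zero) →
        X ≠ pt 0 0 1 (vne₂ one_ne_zero) →
        (projOrbitSL T7 X).encard ≤ 8 →
        (projOrbitSL T7 X).encard = 7 ∧
          ∃ c : Fin 3, pt 1 (zeta 3 ^ (c : ℕ)) (zeta 3 ^ (2 * (c : ℕ))) (vne₀ one_ne_zero)
            ∈ projOrbitSL T7 X) ∧
    (projOrbitSL T7 (pt 1 1 1 (vne₀ one_ne_zero)) ≠
        projOrbitSL T7 (pt 1 (zeta 3) (zeta 3 ^ 2) (vne₀ one_ne_zero)) ∧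
      projOrbitSL T7 (pt 1 1 1 (vne₀ one_ne_zero)) ≠
        projOrbitSL T7 (pt 1 (zeta 3 ^ 2) (zeta 3) (vne₀ one_ne_zero)) ∧
      projOrbitSL T7 (pt 1 (zeta 3) (zeta 3 ^ 2) (vne₀ one_ne_zero)) ≠
        projOrbitSL T7 (pt 1 (zeta 3 ^ 2) (zeta 3) (vne₀ one_ne_zero)) ∧
      (projOrbitSL T7 (pt 1 1 1 (vne₀ one_ne_zero))).encard = 7 ∧
      (projOrbitSL T7 (pt 1 (zeta 3) (zeta 3 ^ 2) (vne₀ one_ne_zero))).encard = 7 ∧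
      (projOrbitSL T7 (pt 1 (zeta 3 ^ 2) (zeta 3) (vne₀ one_ne_zero))).encard = 7) ∧
    (∀ O : Set P2,
        (O = projOrbitSL T7 (pt 1 1 1 (vne₀ one_ne_zero)) ∨
         O = projOrbitSL T7 (pt 1 (zeta 3) (zeta 3 ^ 2) (vne₀ one_ne_zero)) ∨
         O = projOrbitSL T7 (pt 1 (zeta 3 ^ 2) (zeta 3) (vne₀ one_ne_zero))) →
        NoThreeCollinear O ∧ ∀ S ⊆ O, S.encard = 6 → ¬ LiesOnConic S) := by
  simp only [projOrbitSL_eq_orbit]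
  have hω := isPrimitiveRoot_zeta (show 3 ≠ 0 by norm_num)
  have hω2 : (zeta 3 ^ 2) ^ 3 = 1 := by rw [pow_right_comm, hω.pow_eq_one, one_pow]
  have hω4 : zeta 3 = (zeta 3 ^ 2) ^ 2 := by linear_combination (-zeta 3) * hω.pow_eq_one
  have hiii : ∀ w : ℂ, w ^ 3 = 1 → NoThreeCollinear (orbit T7 (orbitPt w 1)) ∧
      ∀ S ⊆ orbit T7 (orbitPt w 1), S.encard = 6 → ¬ LiesOnConic S := fun w hw =>
    ⟨noThreeCollinear_orbit_orbitPt hw, fun _ hS h6 => not_liesOnConic_of_subset_orbit hw hS h6⟩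
  rw [pt_one_eq_orbitPt (one_pow 2).symm, pt_one_eq_orbitPt rfl, pt_one_eq_orbitPt hω4]
  refine ⟨fun X h0 h1 h2 h8 => ?_, ⟨?_, ?_, ?_, encard_orbit_orbitPt (one_pow 3),
    encard_orbit_orbitPt hω.pow_eq_one, encard_orbit_orbitPt hω2⟩, ?_⟩
  · obtain ⟨i, j, hij, hi, hj⟩ := exists_ne_rep_ne_zero h0 h1 h2
    obtain ⟨w, hw, hXw⟩ := exists_orbit_eq_of_encard_le_eight hij hi hj h8
    obtain ⟨c, hc, rfl⟩ := hω.eq_pow_of_pow_eq_one hw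
    refine ⟨hXw ▸ encard_orbit_orbitPt hw, ⟨c, hc⟩, ?_⟩
    rw [pt_one_eq_orbitPt (w := zeta 3 ^ c) (by ring), hXw]
    exact mem_orbit_self _
  · exact orbit_orbitPt_ne (one_pow 3) hω.pow_eq_one (hω.ne_one (by norm_num)).symm
  · exact orbit_orbitPt_ne (one_pow 3) hω2
      (hω.pow_ne_one_of_pos_of_lt two_ne_zero (by norm_num)).symm
  · refine orbit_orbitPt_ne hω.pow_eq_one hω2 fun h => ?_
    have := hω.pow_inj (i := 1) (j := 2) (by norm_num) (by norm_num) (by rwa [pow_one])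
    norm_num at this
  · rintro O (rfl | rfl | rfl)
    exacts [hiii 1 (one_pow 3), hiii _ hω.pow_eq_one, hiii _ hω2]
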